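/- arXiv:2012.13710 — 3 statements merged into one kernel-verified Lean document; each statement's English description precedes it below -/
import Mathlib

section
/- Let $\phi$ be a bounded probability density function on $\mathbb{R}$ with cdf $\Phi$, let $G$ be a symmetric adjacency matrix on $n$ nodes with no self-links and each node having at least one neighbor, and let $t_i \in \mathbb{R}$ and $\theta_3 \in \mathbb{R}$ be given. If $\lambda = |\theta_3| \sup_u \phi(u) < 1$, then there is at most one vector $\sigma \in [0,1]^n$ satisfying $\sigma_i = \Phi\big(t_i + \theta_3 \frac{1}{|\mathcal{N}_i|} \sum_{j \in \mathcal{N}_i} \sigma_j\big)$ for all $i$. -/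
open MeasureTheory Set NNReal

/-!
The equilibria are the fixed points of the best-response map
`σ ↦ (Φ (t i + θ₃ · average of σ over N i))ᵢ` on `ℝⁿ` with the sup norm. Averaging is
`1`-Lipschitz for that norm, and `Φ` is `(sup φ)`-Lipschitz because its increments are
integrals of `φ`, so the map is a contraction with constant `|θ₃| · sup φ < 1` and has at most
one fixed point.
-/

theorem lipschitzWith_integral_Iic {E : Type*} [NormedAddCommGroup E] [NormedSpace ℝ E]
    {f : ℝ → E} {C : ℝ≥0} (hf : Integrable f) (hC : ∀ u, ‖f u‖ ≤ C) :
    LipschitzWith C fun x => ∫ u in Iic x, f u := by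
  refine LipschitzWith.of_dist_le_mul fun a b => ?_
  rw [dist_eq_norm, intervalIntegral.integral_Iic_sub_Iic hf.integrableOn hf.integrableOn,
    Real.dist_eq]
  exact intervalIntegral.norm_integral_le_of_norm_le_const fun u _ => hC u

theorem lipschitzWith_one_finset_average {ι : Type*} [Fintype ι] {s : Finset ι}
    (hs : s.Nonempty) : LipschitzWith 1 fun x : ι → ℝ => (∑ j ∈ s, x j) / s.card := by
  refine LipschitzWith.of_dist_le_mul fun x y => ?_
  have hcard : (0 : ℝ) < s.card := by exact_mod_cast hs.card_pos
  rw [NNReal.coe_one, one_mul, Real.dist_eq, div_sub_div_same, ← Finset.sum_sub_distrib, abs_div,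
    Nat.abs_cast, div_le_iff₀ hcard]
  calc |∑ j ∈ s, (x j - y j)| ≤ ∑ j ∈ s, dist (x j) (y j) := Finset.abs_sum_le_sum_abs _ _
    _ ≤ ∑ _j ∈ s, dist x y := Finset.sum_le_sum fun j _ => dist_le_pi_dist x y j
    _ = dist x y * s.card := by rw [Finset.sum_const, nsmul_eq_mul, mul_comm]

section BestResponse

variable {ι : Type*} [Fintype ι]

noncomputable def bestResponse (N : ι → Finset ι) (Φ : ℝ → ℝ) (t : ι → ℝ) (θ : ℝ) (σ : ι → ℝ) :
    ι → ℝ :=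
  fun i => Φ (t i + θ * ((∑ j ∈ N i, σ j) / (N i).card))

theorem lipschitzWith_bestResponse {N : ι → Finset ι} {Φ : ℝ → ℝ} {K : ℝ≥0} (t : ι → ℝ) (θ : ℝ)
    (hN : ∀ i, (N i).Nonempty) (hΦ : LipschitzWith K Φ) :
    LipschitzWith (K * ‖θ‖₊) (bestResponse N Φ t θ) := by
  refine LipschitzWith.of_dist_le_mul fun x y => (dist_pi_le_iff (by positivity)).2 fun i => ?_
  let average (σ : ι → ℝ) := (∑ j ∈ N i, σ j) / (N i).card
  calc dist (bestResponse N Φ t θ x i) (bestResponse N Φ t θ y i)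
      ≤ K * dist (θ * average x) (θ * average y) := by
        rw [← dist_add_left (t i) (θ * average x)]
        exact hΦ.dist_le_mul _ _
    _ = K * (‖θ‖ * dist (average x) (average y)) := by
        rw [Real.dist_eq, Real.dist_eq, ← mul_sub, abs_mul, Real.norm_eq_abs]
    _ ≤ K * (‖θ‖ * dist x y) := by
        gcongr
        simpa using (lipschitzWith_one_finset_average (hN i)).dist_le_mul x y
    _ = ↑(K * ‖θ‖₊) * dist x y := by push_cast; ring

end BestResponse

theorem unique_equilibrium_general
    (n : ℕ)
    (N : Fin n → Finset (Fin n))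
    (hNne : ∀ i, (N i).Nonempty)
    (φ : ℝ → ℝ)
    (hφ0 : ∀ u, 0 ≤ φ u)
    (hφint : Integrable φ)
    (hφbdd : BddAbove (Set.range φ))
    (Φ : ℝ → ℝ) (hΦ : ∀ x, Φ x = ∫ u in Set.Iic x, φ u)
    (t : Fin n → ℝ) (θ3 : ℝ)
    (hlam : |θ3| * (⨆ u, φ u) < 1)
    (σ τ : Fin n → ℝ)
    (hσ : ∀ i, σ i = Φ (t i + θ3 * (((N i).sum σ) / ((N i).card : ℝ))))
    (hτ : ∀ i, τ i = Φ (t i + θ3 * (((N i).sum τ) / ((N i).card : ℝ)))) :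
    σ = τ := by
  let C : ℝ≥0 := ⟨⨆ u, φ u, (hφ0 0).trans (le_ciSup hφbdd 0)⟩
  have hΦC : LipschitzWith C Φ := by
    rw [funext hΦ]
    exact lipschitzWith_integral_Iic hφint fun u =>
      (Real.norm_of_nonneg (hφ0 u)).trans_le (le_ciSup hφbdd u)
  have hcontr : ContractingWith (C * ‖θ3‖₊) (bestResponse N Φ t θ3) := by
    refine ⟨?_, lipschitzWith_bestResponse t θ3 hNne hΦC⟩
    rw [← NNReal.coe_lt_coe, NNReal.coe_mul, coe_nnnorm, Real.norm_eq_abs, mul_comm]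
    exact hlam
  exact hcontr.fixedPoint_unique' (funext fun i => (hσ i).symm) (funext fun i => (hτ i).symm)

/-- Uniqueness of the Bayes-Nash equilibrium of the treatment
choice game when `λ = |θ₃| · sup φ < 1`. -/
theorem unique_equilibrium
    (n : ℕ) (G : Fin n → Fin n → Bool)
    (hGsym : ∀ i j, G i j = G j i)
    (hGirr : ∀ i, G i i = false)
    (N : Fin n → Finset (Fin n))
    (hN : ∀ i, N i = Finset.univ.filter (fun j => G i j = true))
    (hNne : ∀ i, (N i).Nonempty)
    (φ : ℝ → ℝ)
    (hφ0 : ∀ u, 0 ≤ φ u)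
    (hφint : Integrable φ)
    (hφ1 : (∫ u, φ u) = 1)
    (hφbdd : BddAbove (Set.range φ))
    (Φ : ℝ → ℝ) (hΦ : ∀ x, Φ x = ∫ u in Set.Iic x, φ u)
    (t : Fin n → ℝ) (θ3 : ℝ)
    (hlam : |θ3| * (⨆ u, φ u) < 1)
    (σ τ : Fin n → ℝ)
    (hσ01 : ∀ i, σ i ∈ Set.Icc (0:ℝ) 1)
    (hτ01 : ∀ i, τ i ∈ Set.Icc (0:ℝ) 1)
    (hσ : ∀ i, σ i = Φ (t i + θ3 * (((N i).sum σ) / ((N i).card : ℝ))))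
    (hτ : ∀ i, τ i = Φ (t i + θ3 * (((N i).sum τ) / ((N i).card : ℝ)))) :
    σ = τ :=
  unique_equilibrium_general n N hNne φ hφ0 hφint hφbdd Φ hΦ t θ3 hlam σ τ hσ hτ
end

section
/- Under the hypotheses of the uniqueness theorem (in particular $\lambda = |\theta_3|\sup_u \phi(u) < 1$), the best-response map $T : [0,1]^n \to [0,1]^n$ defined by $T(\sigma)_i = \Phi\big(t_i + \theta_3 \frac{1}{|\mathcal{N}_i|}\sum_{j \in \mathcal{N}_i}\sigma_j\big)$ is a contraction with respect to the sup norm $\|\sigma\|_\infty = \max_i |\sigma_i|$, with Lipschitz constant at most $\lambda$. -/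
open MeasureTheory Set

/-! Increments of `Φ` are integrals of `φ ≤ sup φ`, so `Φ` is `sup φ`-Lipschitz; neighbourhood
averages are `1`-Lipschitz for the sup norm, and the inner affine map scales by `|θ₃|`. -/

theorem abs_integral_Iic_sub_integral_Iic_le {f : ℝ → ℝ} {M : ℝ} (hf : Integrable f)
    (hfM : ∀ u, |f u| ≤ M) (x y : ℝ) :
    |(∫ u in Iic x, f u) - ∫ u in Iic y, f u| ≤ M * |x - y| := by
  rw [intervalIntegral.integral_Iic_sub_Iic hf.integrableOn hf.integrableOn]
  exact intervalIntegral.norm_integral_le_of_norm_le_const fun u _ =>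
    (Real.norm_eq_abs _).trans_le (hfM u)

theorem abs_sum_div_card_sub_sum_div_card_le {ι : Type*} [Fintype ι] {s : Finset ι}
    (hs : s.Nonempty) (σ τ : ι → ℝ) :
    |s.sum σ / s.card - s.sum τ / s.card| ≤ ‖σ - τ‖ := by
  have hcard : (0 : ℝ) < s.card := by exact_mod_cast hs.card_pos
  rw [div_sub_div_same, abs_div, abs_of_pos hcard, div_le_iff₀ hcard, ← Finset.sum_sub_distrib]
  calc |∑ j ∈ s, (σ j - τ j)| ≤ ∑ j ∈ s, |σ j - τ j| := Finset.abs_sum_le_sum_abs _ _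
    _ ≤ ∑ _j ∈ s, ‖σ - τ‖ := Finset.sum_le_sum fun j _ => norm_le_pi_norm (σ - τ) j
    _ = ‖σ - τ‖ * s.card := by rw [Finset.sum_const, nsmul_eq_mul, mul_comm]

theorem best_response_contraction_general
    (n : ℕ)
    (N : Fin n → Finset (Fin n))
    (hNne : ∀ i, (N i).Nonempty)
    (φ : ℝ → ℝ)
    (hφ0 : ∀ u, 0 ≤ φ u)
    (hφint : Integrable φ)
    (hφbdd : BddAbove (Set.range φ))
    (Φ : ℝ → ℝ) (hΦ : ∀ x, Φ x = ∫ u in Set.Iic x, φ u)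
    (t : Fin n → ℝ) (θ3 : ℝ)
    (T : (Fin n → ℝ) → (Fin n → ℝ))
    (hT : ∀ σ i, T σ i = Φ (t i + θ3 * (((N i).sum σ) / ((N i).card : ℝ)))) :
    ∀ σ τ : Fin n → ℝ, (∀ i, σ i ∈ Set.Icc (0:ℝ) 1) → (∀ i, τ i ∈ Set.Icc (0:ℝ) 1) →
      ‖T σ - T τ‖ ≤ (|θ3| * (⨆ u, φ u)) * ‖σ - τ‖ := by
  intro σ τ _ _
  set M := ⨆ u, φ u
  have hφM : ∀ u, |φ u| ≤ M := fun u => (abs_of_nonneg (hφ0 u)).trans_le (le_ciSup hφbdd u)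
  have hM : 0 ≤ M := (abs_nonneg _).trans (hφM 0)
  refine (pi_norm_le_iff_of_nonneg (by positivity)).2 fun i => ?_
  rw [Pi.sub_apply, hT, hT, Real.norm_eq_abs, hΦ, hΦ]
  calc _ ≤ M * |θ3 * ((N i).sum σ / (N i).card) - θ3 * ((N i).sum τ / (N i).card)| := by
        refine (abs_integral_Iic_sub_integral_Iic_le hφint hφM _ _).trans_eq ?_
        rw [add_sub_add_left_eq_sub]
    _ = |θ3| * M * |(N i).sum σ / (N i).card - (N i).sum τ / (N i).card| := by
        rw [← mul_sub, abs_mul]; ring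
    _ ≤ |θ3| * M * ‖σ - τ‖ := by
        gcongr
        exact abs_sum_div_card_sub_sum_div_card_le (hNne i) σ τ

/-- The best-response map is a sup-norm contraction with
Lipschitz constant at most `λ = |θ₃| · sup φ`. -/
theorem best_response_contraction
    (n : ℕ) (G : Fin n → Fin n → Bool)
    (hGsym : ∀ i j, G i j = G j i)
    (hGirr : ∀ i, G i i = false)
    (N : Fin n → Finset (Fin n))
    (hN : ∀ i, N i = Finset.univ.filter (fun j => G i j = true))
    (hNne : ∀ i, (N i).Nonempty)
    (φ : ℝ → ℝ)
    (hφ0 : ∀ u, 0 ≤ φ u)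
    (hφint : Integrable φ)
    (hφ1 : (∫ u, φ u) = 1)
    (hφbdd : BddAbove (Set.range φ))
    (Φ : ℝ → ℝ) (hΦ : ∀ x, Φ x = ∫ u in Set.Iic x, φ u)
    (t : Fin n → ℝ) (θ3 : ℝ)
    (hlam : |θ3| * (⨆ u, φ u) < 1)
    (T : (Fin n → ℝ) → (Fin n → ℝ))
    (hT : ∀ σ i, T σ i = Φ (t i + θ3 * (((N i).sum σ) / ((N i).card : ℝ)))) :
    ∀ σ τ : Fin n → ℝ, (∀ i, σ i ∈ Set.Icc (0:ℝ) 1) → (∀ i, τ i ∈ Set.Icc (0:ℝ) 1) →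
      ‖T σ - T τ‖ ≤ (|θ3| * (⨆ u, φ u)) * ‖σ - τ‖ :=
  best_response_contraction_general n N hNne φ hφ0 hφint hφbdd Φ hΦ t θ3 T hT
end

section
/- Suppose equilibrium choice probabilities at parameters $\theta$ and $\theta^0$ coincide: $\sigma_i^*(S,\theta) = \sigma_i^*(S,\theta^0)$ for all $i \in \{1,\ldots,n\}$, where each satisfies its fixed-point equation $\Phi^{-1}(\sigma_i^*(S,\vartheta)) = X_i'\vartheta_1 + \vartheta_2 Z_i + \vartheta_3 \frac{1}{|\mathcal{N}_i|}\sum_{j\in\mathcal{N}_i}\sigma_j^*(S,\vartheta)$ for $\vartheta \in \{\theta, \theta^0\}$, with $\Phi$ strictly increasing. If the matrix $\sum_{i=1}^n R_i R_i'$ with $R_i = (X_i', Z_i, \frac{1}{|\mathcal{N}_i|}\sum_{j\in\mathcal{N}_i}\sigma_j^*(S,\theta^0))'$ is positive definite, then $\theta = \theta^0$. -/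
/-!
Since `Φ` is injective and the two equilibria coincide, the two fixed-point equations say that
the linear index `Xᵢ'ϑ₁ + ϑ₂ Zᵢ + ϑ₃ πᵢ` takes the same value at `θ` and `θ⁰` for every `i`,
where `πᵢ` is the common neighbourhood average. The index is additive in `ϑ`, so `θ - θ⁰`
is annihilated by every `Rᵢ`; positive definiteness of `∑ Rᵢ Rᵢ'` then forces `θ - θ⁰ = 0`.
-/

open Finset

theorem eq_of_forall_map_eq_of_sum_sq_pos {ι V : Type*} [Fintype ι] [AddGroup V]
    (R : ι → V →+ ℝ) (hR : ∀ v, v ≠ 0 → 0 < ∑ i, R i v ^ 2) {θ θ₀ : V}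
    (h : ∀ i, R i θ = R i θ₀) : θ = θ₀ := by
  by_contra hne
  have hzero : ∀ i, R i (θ - θ₀) = 0 := fun i => by rw [map_sub, h i, sub_self]
  simpa [hzero] using hR _ (sub_ne_zero.mpr hne)

def linearIndex {k : ℕ} (x : Fin k → ℝ) (z m : ℝ) : (Fin k → ℝ) × ℝ × ℝ →+ ℝ :=
  AddMonoidHom.mk' (fun ϑ => ∑ a, x a * ϑ.1 a + ϑ.2.1 * z + ϑ.2.2 * m) fun ϑ ϑ' => by
    simp only [Prod.fst_add, Prod.snd_add, Pi.add_apply, mul_add, sum_add_distrib]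
    ring

theorem observational_equivalence_identification_general
    (n k : ℕ)
    (N : Fin n → Finset (Fin n))
    (Φ : ℝ → ℝ) (hΦmono : StrictMono Φ)
    (X : Fin n → (Fin k → ℝ)) (Z : Fin n → ℝ)
    (θ1 θ01 : Fin k → ℝ) (θ2 θ3 θ02 θ03 : ℝ)
    (s s0 : Fin n → ℝ)
    (hfix : ∀ i, s i
      = Φ ((∑ a, X i a * θ1 a) + θ2 * Z i + θ3 * (((N i).sum s) / ((N i).card : ℝ))))
    (hfix0 : ∀ i, s0 i
      = Φ ((∑ a, X i a * θ01 a) + θ02 * Z i + θ03 * (((N i).sum s0) / ((N i).card : ℝ))))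
    (heq : ∀ i, s i = s0 i)
    (hpd : ∀ (v1 : Fin k → ℝ) (v2 v3 : ℝ), (v1 ≠ 0 ∨ v2 ≠ 0 ∨ v3 ≠ 0) →
      0 < ∑ i, ((∑ a, X i a * v1 a) + Z i * v2
        + (((N i).sum s0) / ((N i).card : ℝ)) * v3) ^ 2) :
    θ1 = θ01 ∧ θ2 = θ02 ∧ θ3 = θ03 := by
  obtain rfl : s = s0 := funext heq
  let R i := linearIndex (X i) (Z i) ((N i).sum s / (N i).card)
  have hindex : ∀ i, R i (θ1, θ2, θ3) = R i (θ01, θ02, θ03) := fun i =>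
    hΦmono.injective ((hfix i).symm.trans (hfix0 i))
  have hR : ∀ v, v ≠ 0 → 0 < ∑ i, R i v ^ 2 := by
    rintro ⟨v1, v2, v3⟩ hv
    convert hpd v1 v2 v3 (by simp only [ne_eq, Prod.mk_eq_zero, not_and_or] at hv; exact hv) using 4 with i
    simp only [R, linearIndex, AddMonoidHom.mk'_apply]
    ring
  simpa using eq_of_forall_map_eq_of_sum_sq_pos R hR hindex

/-- Observational equivalence of equilibrium choice probabilities
at two parameter values, together with positive definiteness of the moment
matrix of `Rᵢ = (Xᵢ', Zᵢ, πᵢ*(S,θ⁰))'`, forces the parameters to coincide. -/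
theorem observational_equivalence_identification
    (n k : ℕ) (G : Fin n → Fin n → Bool)
    (hGsym : ∀ i j, G i j = G j i)
    (hGirr : ∀ i, G i i = false)
    (N : Fin n → Finset (Fin n))
    (hN : ∀ i, N i = Finset.univ.filter (fun j => G i j = true))
    (hNne : ∀ i, (N i).Nonempty)
    (Φ : ℝ → ℝ) (hΦmono : StrictMono Φ)
    (X : Fin n → (Fin k → ℝ)) (Z : Fin n → ℝ) (hZ : ∀ i, Z i = 0 ∨ Z i = 1)
    (θ1 θ01 : Fin k → ℝ) (θ2 θ3 θ02 θ03 : ℝ)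
    (s s0 : Fin n → ℝ)
    (hfix : ∀ i, s i
      = Φ ((∑ a, X i a * θ1 a) + θ2 * Z i + θ3 * (((N i).sum s) / ((N i).card : ℝ))))
    (hfix0 : ∀ i, s0 i
      = Φ ((∑ a, X i a * θ01 a) + θ02 * Z i + θ03 * (((N i).sum s0) / ((N i).card : ℝ))))
    (heq : ∀ i, s i = s0 i)
    (hpd : ∀ (v1 : Fin k → ℝ) (v2 v3 : ℝ), (v1 ≠ 0 ∨ v2 ≠ 0 ∨ v3 ≠ 0) →
      0 < ∑ i, ((∑ a, X i a * v1 a) + Z i * v2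
        + (((N i).sum s0) / ((N i).card : ℝ)) * v3) ^ 2) :
    θ1 = θ01 ∧ θ2 = θ02 ∧ θ3 = θ03 :=
  observational_equivalence_identification_general n k N Φ hΦmono X Z θ1 θ01 θ2 θ3 θ02 θ03 s s0 hfix
    hfix0 heq hpd
end
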